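/- arXiv:2511.14232 — 3 statements merged into one kernel-verified Lean document; each statement's English description precedes it below -/
import Mathlib

section
/- Let (a_n)_{n∈ℕ} be a sequence in ℝ^d with ‖a_n‖ ≤ M for all n, and let s_n = (1/n) ∑_{i=0}^{n-1} a_i for n ≥ 1. Then the set of accumulation points of (s_n)_{n≥1} is a nonempty, compact, connected subset of the closed ball of radius M. -/
open Filter Topology

theorem stmt0 {E : Type*} [NormedAddCommGroup E] [NormedSpace ℝ E]
    [FiniteDimensional ℝ E] (a : ℕ → E) (M : ℝ) (hM : ∀ n, ‖a n‖ ≤ M)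
    (s : ℕ → E) (hs : ∀ n, s n = (n : ℝ)⁻¹ • ∑ i ∈ Finset.range n, a i)
    (A : Set E)
    (hA : A = {x | ∃ φ : ℕ → ℕ, StrictMono φ ∧ (∀ n, 1 ≤ φ n) ∧
      Tendsto (fun n => s (φ n)) atTop (𝓝 x)}) :
    A.Nonempty ∧ IsCompact A ∧ IsConnected A ∧ A ⊆ Metric.closedBall 0 M := by
  have hM0 : 0 ≤ M := le_trans (norm_nonneg _) (hM 0)
  -- n • s n = partial sum
  have hsmul : ∀ n : ℕ, (n : ℝ) • s n = ∑ i ∈ Finset.range n, a i := by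
    intro n
    rcases Nat.eq_zero_or_pos n with h | h
    · subst h; simp
    · rw [hs, smul_smul, mul_inv_cancel₀ (Nat.cast_ne_zero.mpr h.ne'), one_smul]
  -- bound on s
  have hsb : ∀ n, ‖s n‖ ≤ M := by
    intro n
    rcases Nat.eq_zero_or_pos n with h | h
    · subst h; simpa [hs] using hM0
    · have hn : (0 : ℝ) < n := by exact_mod_cast h
      rw [hs, norm_smul]
      have h1 : ‖∑ i ∈ Finset.range n, a i‖ ≤ n * M := by
        calc ‖∑ i ∈ Finset.range n, a i‖ ≤ ∑ _i ∈ Finset.range n, M :=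
              norm_sum_le_of_le _ fun i _ => hM i
          _ = n * M := by simp [mul_comm]
      calc ‖(n : ℝ)⁻¹‖ * ‖∑ i ∈ Finset.range n, a i‖
          ≤ (n : ℝ)⁻¹ * (n * M) := by
            rw [Real.norm_eq_abs, abs_of_pos (by positivity)]
            exact mul_le_mul_of_nonneg_left h1 (by positivity)
        _ = M := by field_simp
  have hsball : ∀ n, s n ∈ Metric.closedBall (0 : E) M := fun n => by
    simpa [Metric.mem_closedBall, dist_eq_norm] using hsb n
  -- consecutive differences tend to zero
  have hkey : ∀ n : ℕ, s (n + 1) - s n = ((n : ℝ) + 1)⁻¹ • (a n - s n) := by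
    intro n
    have hne : ((n : ℝ) + 1) ≠ 0 := by positivity
    have h1 : ((n : ℝ) + 1) • s (n + 1) = (n : ℝ) • s n + a n := by
      have := hsmul (n + 1)
      rw [Finset.sum_range_succ, ← hsmul n] at this
      push_cast at this
      exact this
    have h2 : ((n : ℝ) + 1) • (s (n + 1) - s n) = a n - s n := by
      rw [smul_sub, h1, add_smul, one_smul]; abel
    calc s (n + 1) - s n
        = ((n : ℝ) + 1)⁻¹ • (((n : ℝ) + 1) • (s (n + 1) - s n)) := by
          rw [smul_smul, inv_mul_cancel₀ hne, one_smul]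
      _ = ((n : ℝ) + 1)⁻¹ • (a n - s n) := by rw [h2]
  have hdiff : Tendsto (fun n => s (n + 1) - s n) atTop (𝓝 0) := by
    apply squeeze_zero_norm (a := fun n : ℕ => 2 * M * ((n : ℝ) + 1)⁻¹)
    · intro n
      rw [hkey n, norm_smul, Real.norm_eq_abs, abs_of_pos (by positivity), mul_comm]
      have : ‖a n - s n‖ ≤ 2 * M := by
        calc ‖a n - s n‖ ≤ ‖a n‖ + ‖s n‖ := norm_sub_le _ _
          _ ≤ 2 * M := by linarith [hM n, hsb n]
      exact mul_le_mul_of_nonneg_right this (by positivity)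
    · have h : Tendsto (fun n : ℕ => 1 / ((n : ℝ) + 1)) atTop (𝓝 0) :=
        tendsto_one_div_add_atTop_nhds_zero_nat
      have := h.const_mul (2 * M)
      simpa [one_div] using this
  -- membership criterion for A
  have hmem : ∀ (x : E) (φ : ℕ → ℕ), StrictMono φ →
      Tendsto (fun n => s (φ n)) atTop (𝓝 x) → x ∈ A := by
    intro x φ hφ hlim
    rw [hA]
    refine ⟨fun n => φ (n + 1), hφ.comp fun _ _ h => Nat.add_lt_add_right h 1, fun n => ?_, ?_⟩
    · exact le_trans (by omega : 1 ≤ n + 1) hφ.le_apply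
    · exact hlim.comp (tendsto_add_atTop_nat 1)
  -- A nonempty
  obtain ⟨x₀, _, φ₀, hφ₀, hlim₀⟩ :=
    (isCompact_closedBall (0 : E) M).tendsto_subseq hsball
  have hne : A.Nonempty := ⟨x₀, hmem x₀ φ₀ hφ₀ hlim₀⟩
  -- A ⊆ closed ball
  have hsub : A ⊆ Metric.closedBall 0 M := by
    intro x hx
    rw [hA] at hx
    obtain ⟨φ, hφ, -, hlim⟩ := hx
    exact Metric.isClosed_closedBall.mem_of_tendsto hlim
      (Eventually.of_forall fun n => hsball (φ n))
  -- A is the set of cluster points, hence closed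
  have hAcl : A = {x | MapClusterPt x atTop s} := by
    rw [hA]; ext x
    constructor
    · rintro ⟨φ, hφ, -, hlim⟩
      exact MapClusterPt.of_comp hφ.tendsto_atTop hlim.mapClusterPt
    · intro hx
      obtain ⟨φ, hφ, hlim⟩ := TopologicalSpace.FirstCountableTopology.tendsto_subseq hx
      refine ⟨fun n => φ (n + 1), hφ.comp fun _ _ h => Nat.add_lt_add_right h 1, fun n => ?_, ?_⟩
      · exact le_trans (by omega : 1 ≤ n + 1) hφ.le_apply
      · exact hlim.comp (tendsto_add_atTop_nat 1)
  have hclosed : IsClosed A := by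
    rw [hAcl]; exact isClosed_setOf_clusterPt
  have hcpt : IsCompact A :=
    (isCompact_closedBall 0 M).of_isClosed_subset hclosed hsub
  -- connectedness
  have hconn : IsPreconnected A := by
    rw [isPreconnected_iff_subset_of_fully_disjoint_closed hclosed]
    intro u v hu hv hAuv huv
    by_contra hcon
    push_neg at hcon
    obtain ⟨hnu, hnv⟩ := hcon
    -- the two pieces
    set B : Set E := A ∩ u with hBdef
    set C : Set E := A ∩ v with hCdef
    have hBne : B.Nonempty := by
      rw [Set.not_subset] at hnv
      obtain ⟨x, hxA, hxv⟩ := hnv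
      rcases hAuv hxA with h | h
      · exact ⟨x, hxA, h⟩
      · exact absurd h hxv
    have hCne : C.Nonempty := by
      rw [Set.not_subset] at hnu
      obtain ⟨x, hxA, hxu⟩ := hnu
      rcases hAuv hxA with h | h
      · exact absurd h hxu
      · exact ⟨x, hxA, h⟩
    have hBclosed : IsClosed B := hclosed.inter hu
    have hCcpt : IsCompact C := hcpt.inter_right hv
    set g : E → ℝ := fun x => Metric.infDist x B with hgdef
    have hgcont : Continuous g := Metric.continuous_infDist_pt B
    obtain ⟨c₀, hc₀C, hc₀min⟩ := hCcpt.exists_isMinOn hCne hgcont.continuousOn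
    set δ : ℝ := g c₀ with hδdef
    have hδpos : 0 < δ := by
      rw [hδdef, hgdef]
      refine (hBclosed.notMem_iff_infDist_pos hBne).1 ?_
      intro hc₀B
      exact Set.disjoint_left.mp huv hc₀B.2 hc₀C.2
    -- frequently close to B
    have freqB : ∃ᶠ n in atTop, g (s n) < δ / 3 := by
      obtain ⟨b, hbB⟩ := hBne
      have hbA : b ∈ A := hbB.1
      rw [hA] at hbA
      obtain ⟨φ, hφ, -, hlim⟩ := hbA
      have hgb : g b = 0 := Metric.infDist_zero_of_mem hbB
      have : Tendsto (fun n => g (s (φ n))) atTop (𝓝 0) := by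
        simpa [hgb, Function.comp_def] using (hgcont.tendsto b).comp hlim
      have hev : ∀ᶠ n in atTop, g (s (φ n)) < δ / 3 :=
        this.eventually (gt_mem_nhds (by linarith))
      exact hφ.tendsto_atTop.frequently hev.frequently
    -- frequently close to C
    have freqC : ∃ᶠ n in atTop, 2 * δ / 3 < g (s n) := by
      obtain ⟨c, hcC⟩ := hCne
      have hcA : c ∈ A := hcC.1
      rw [hA] at hcA
      obtain ⟨φ, hφ, -, hlim⟩ := hcA
      have hgc : 2 * δ / 3 < g c := lt_of_lt_of_le (by linarith) (hc₀min hcC)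
      have : Tendsto (fun n => g (s (φ n))) atTop (𝓝 (g c)) :=
        (hgcont.tendsto c).comp hlim
      have hev : ∀ᶠ n in atTop, 2 * δ / 3 < g (s (φ n)) :=
        this.eventually (lt_mem_nhds hgc)
      exact hφ.tendsto_atTop.frequently hev.frequently
    -- small steps of g ∘ s
    have hstep : ∀ᶠ n in atTop, |g (s (n + 1)) - g (s n)| < δ / 3 := by
      have hd : Tendsto (fun n => ‖s (n + 1) - s n‖) atTop (𝓝 0) := by
        simpa using hdiff.norm
      filter_upwards [hd.eventually (gt_mem_nhds (show (0:ℝ) < δ / 3 by linarith))]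
        with n hn
      have hlip : |g (s (n + 1)) - g (s n)| ≤ ‖s (n + 1) - s n‖ := by
        have := (Metric.lipschitz_infDist_pt B).dist_le_mul (s (n + 1)) (s n)
        simpa [Real.dist_eq, dist_eq_norm] using this
      linarith
    -- frequently in the middle band
    have freqMid : ∃ᶠ n in atTop, g (s n) ∈ Set.Icc (δ / 3) (2 * δ / 3) := by
      rw [frequently_atTop]
      intro N
      obtain ⟨N₀, hN₀⟩ := eventually_atTop.1 hstep
      obtain ⟨n₁, hn₁N, hn₁⟩ := frequently_atTop.1 freqB (max N N₀)
      obtain ⟨n₂, hn₂N, hn₂⟩ := frequently_atTop.1 freqC (n₁ + 1)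
      have hex : ∃ k, n₁ ≤ k ∧ δ / 3 ≤ g (s k) :=
        ⟨n₂, by omega, by linarith⟩
      set k := Nat.find hex with hkdef
      have hk := Nat.find_spec hex
      have hkn₁ : n₁ < k := by
        rcases lt_or_eq_of_le hk.1 with h | h
        · exact h
        · exact absurd hk.2 (by rw [← h]; linarith)
      have hprev : g (s (k - 1)) < δ / 3 := by
        have hmin := Nat.find_min hex (show k - 1 < k by omega)
        by_contra hcon2
        push_neg at hcon2
        exact hmin ⟨by omega, hcon2⟩
      have hstepk : |g (s k) - g (s (k - 1))| < δ / 3 := by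
        have := hN₀ (k - 1) (by omega)
        rwa [show k - 1 + 1 = k by omega] at this
      refine ⟨k, by omega, hk.2, ?_⟩
      have : g (s k) - g (s (k - 1)) ≤ |g (s k) - g (s (k - 1))| := le_abs_self _
      linarith
    -- extract a cluster point in the middle band: contradiction
    obtain ⟨φ, hφm, hφP⟩ := extraction_of_frequently_atTop freqMid
    have hK : ∀ n, s (φ n) ∈ Metric.closedBall (0 : E) M ∩
        (g ⁻¹' Set.Icc (δ / 3) (2 * δ / 3)) := fun n => ⟨hsball _, hφP n⟩
    have hKcpt : IsCompact (Metric.closedBall (0 : E) M ∩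
        (g ⁻¹' Set.Icc (δ / 3) (2 * δ / 3))) :=
      (isCompact_closedBall 0 M).inter_right (isClosed_Icc.preimage hgcont)
    obtain ⟨x, hxK, ψ, hψ, hlim⟩ := hKcpt.tendsto_subseq hK
    have hxA : x ∈ A := hmem x (φ ∘ ψ) (hφm.comp hψ) hlim
    have hxg := hxK.2
    simp only [Set.mem_preimage, Set.mem_Icc] at hxg
    rcases hAuv hxA with h | h
    · have : g x = 0 := Metric.infDist_zero_of_mem ⟨hxA, h⟩
      linarith [hxg.1]
    · have : δ ≤ g x := hc₀min ⟨hxA, h⟩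
      linarith [hxg.2]
  exact ⟨hne, hcpt, ⟨hne, hconn⟩, hsub⟩
end

section
/- For each s ∈ ℕ let k_s ≥ 1 and let a^s = (a^s_0, …, a^s_{k_s−1}) be a finite sequence in ℝ^d with ‖a^s_k‖ ≤ C_s for all k, and suppose ‖(1/k_s) ∑_{k=0}^{k_s−1} a^s_k − ρ‖ ≤ 2^{−s} for a fixed ρ ∈ ℝ^d. Then there exists a sequence of positive integers (p_s)_{s∈ℕ} such that, defining b : ℕ → ℝ^d as the infinite concatenation (a^0)^{p_0} (a^1)^{p_1} (a^2)^{p_2} ⋯ (each block a^s repeated p_s times), one has (1/n) ∑_{i=0}^{n−1} b_i → ρ as n → ∞. -/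
open Filter Topology

set_option maxHeartbeats 1000000

private lemma sum_mod_mul {E : Type*} [AddCommMonoid E] (f : ℕ → E) (k q : ℕ) :
    ∑ i ∈ Finset.range (q * k), f (i % k) = q • ∑ i ∈ Finset.range k, f i := by
  induction q with
  | zero => simp
  | succ q ih =>
    rw [Nat.succ_mul, Finset.sum_range_add, ih, succ_nsmul]
    congr 1
    refine Finset.sum_congr rfl fun i hi => ?_
    rw [Finset.mem_range] at hi
    rw [add_comm, Nat.add_mul_mod_self_right, Nat.mod_eq_of_lt hi]

private lemma sum_mod_eq {E : Type*} [AddCommMonoid E] (f : ℕ → E) (k j : ℕ) (hk : 0 < k) :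
    ∑ i ∈ Finset.range j, f (i % k) =
      (j / k) • (∑ i ∈ Finset.range k, f i) + ∑ i ∈ Finset.range (j % k), f i := by
  conv_lhs => rw [← Nat.div_add_mod j k, mul_comm k (j / k)]
  rw [Finset.sum_range_add, sum_mod_mul]
  congr 1
  refine Finset.sum_congr rfl fun i hi => ?_
  rw [Finset.mem_range] at hi
  have hik : i < k := lt_of_lt_of_le hi (le_of_lt (Nat.mod_lt _ hk))
  rw [add_comm, Nat.add_mul_mod_self_right, Nat.mod_eq_of_lt hik]

noncomputable def Ehat (k : ℕ → ℕ) (M : ℕ → ℝ) : ℕ → ℝ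
  | 0 => 0
  | s + 1 => Ehat k M s +
      ((max 1 ⌈((s : ℝ) + 1) * (Ehat k M s + M (s + 1))⌉₊ : ℕ) : ℝ) * (k s) * (2 : ℝ)⁻¹ ^ s

noncomputable def psel (k : ℕ → ℕ) (M : ℕ → ℝ) (s : ℕ) : ℕ :=
  max 1 ⌈((s : ℝ) + 1) * (Ehat k M s + M (s + 1))⌉₊

private lemma Ehat_succ (k : ℕ → ℕ) (M : ℕ → ℝ) (s : ℕ) :
    Ehat k M (s + 1) = Ehat k M s + (psel k M s : ℝ) * (k s) * (2 : ℝ)⁻¹ ^ s := rfl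

private lemma psel_pos (k : ℕ → ℕ) (M : ℕ → ℝ) (s : ℕ) : 0 < psel k M s :=
  lt_of_lt_of_le one_pos (le_max_left _ _)

private lemma le_psel (k : ℕ → ℕ) (M : ℕ → ℝ) (s : ℕ) :
    ((s : ℝ) + 1) * (Ehat k M s + M (s + 1)) ≤ (psel k M s : ℝ) := by
  exact (Nat.le_ceil _).trans (Nat.cast_le.mpr (le_max_right 1 _))

private lemma Ehat_nonneg (k : ℕ → ℕ) (M : ℕ → ℝ) (s : ℕ) : 0 ≤ Ehat k M s := by
  induction s with
  | zero => exact le_refl 0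
  | succ s ih =>
    rw [Ehat_succ]
    positivity

theorem stmt6 {E : Type*} [NormedAddCommGroup E] [NormedSpace ℝ E]
    (k : ℕ → ℕ) (hk : ∀ s, 1 ≤ k s) (a : ℕ → ℕ → E) (C : ℕ → ℝ)
    (hC : ∀ s i, i < k s → ‖a s i‖ ≤ C s) (ρ : E)
    (havg : ∀ s, ‖(k s : ℝ)⁻¹ • ∑ i ∈ Finset.range (k s), a s i - ρ‖ ≤ (2 : ℝ)⁻¹ ^ s) :
    ∃ p : ℕ → ℕ, (∀ s, 0 < p s) ∧
      ∀ b : ℕ → E,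
        (∀ s n, (∑ t ∈ Finset.range s, p t * k t) ≤ n →
          n < (∑ t ∈ Finset.range (s + 1), p t * k t) →
          b n = a s ((n - ∑ t ∈ Finset.range s, p t * k t) % k s)) →
        Tendsto (fun n : ℕ => (n : ℝ)⁻¹ • ∑ i ∈ Finset.range n, b i) atTop (𝓝 ρ) := by
  set M : ℕ → ℝ := fun s => (k s : ℝ) * (C s + ‖ρ‖) with hM
  refine ⟨psel k M, fun s => psel_pos k M s, ?_⟩
  intro b hb
  have hk0 : ∀ s, 0 < k s := hk
  have hC0 : ∀ s, 0 ≤ C s := fun s => (norm_nonneg _).trans (hC s 0 (hk0 s))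
  have hM0 : ∀ s, 0 ≤ M s := fun s =>
    mul_nonneg (Nat.cast_nonneg _) (add_nonneg (hC0 s) (norm_nonneg ρ))
  set N : ℕ → ℕ := fun s => ∑ t ∈ Finset.range s, psel k M t * k t with hN
  have hNsucc : ∀ s, N (s + 1) = N s + psel k M s * k s := fun s => Finset.sum_range_succ _ s
  have hpk : ∀ s, 1 ≤ psel k M s * k s := fun s => Nat.one_le_iff_ne_zero.mpr
    (Nat.pos_iff_ne_zero.mp (Nat.mul_pos (psel_pos k M s) (hk0 s)))
  have hNmono : StrictMono N := strictMono_nat_of_lt_succ fun s => by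
    have := hpk s; rw [hNsucc]; omega
  have hNge : ∀ s, s ≤ N s := fun s => hNmono.le_apply
  have hbv : ∀ s j, j < psel k M s * k s → b (N s + j) = a s (j % k s) := by
    intro s j hj
    have h1 : N s ≤ N s + j := Nat.le_add_right _ _
    have h2 : N s + j < N (s + 1) := by rw [hNsucc]; omega
    have := hb s (N s + j) h1 h2
    rw [show N s + j - ∑ t ∈ Finset.range s, psel k M t * k t = j from Nat.add_sub_cancel_left _ _] at this
    exact this
  set A : ℕ → E := fun s => ∑ i ∈ Finset.range (k s), a s i with hA
  have hAρ : ∀ s, ‖A s - (k s : ℝ) • ρ‖ ≤ (k s : ℝ) * (2 : ℝ)⁻¹ ^ s := by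
    intro s
    have hkne : ((k s : ℕ) : ℝ) ≠ 0 := Nat.cast_ne_zero.mpr (Nat.pos_iff_ne_zero.mp (hk0 s))
    have heq : A s - (k s : ℝ) • ρ = (k s : ℝ) • ((k s : ℝ)⁻¹ • A s - ρ) := by
      rw [smul_sub, smul_inv_smul₀ hkne]
    rw [heq, norm_smul, Real.norm_natCast]
    exact mul_le_mul_of_nonneg_left (havg s) (Nat.cast_nonneg _)
  have hpartial : ∀ s r, r ≤ k s → ‖(∑ i ∈ Finset.range r, a s i) - (r : ℝ) • ρ‖ ≤ M s := by
    intro s r hr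
    have h1 : ‖(∑ i ∈ Finset.range r, a s i) - (r : ℝ) • ρ‖
        ≤ ‖∑ i ∈ Finset.range r, a s i‖ + ‖(r : ℝ) • ρ‖ := norm_sub_le _ _
    have h2 : ‖∑ i ∈ Finset.range r, a s i‖ ≤ (r : ℝ) * C s := by
      refine (norm_sum_le _ _).trans ?_
      have := Finset.sum_le_sum (f := fun i => ‖a s i‖) (g := fun _ => C s)
        (fun i hi => hC s i (lt_of_lt_of_le (Finset.mem_range.mp hi) hr))
      simpa using this
    have h3 : ‖(r : ℝ) • ρ‖ = (r : ℝ) * ‖ρ‖ := by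
      rw [norm_smul, Real.norm_natCast]
    have hrk : (r : ℝ) ≤ (k s : ℝ) := Nat.cast_le.mpr hr
    show ‖(∑ i ∈ Finset.range r, a s i) - (r : ℝ) • ρ‖ ≤ (k s : ℝ) * (C s + ‖ρ‖)
    nlinarith [h1, h2, h3, hrk, hC0 s, norm_nonneg ρ,
      mul_nonneg (sub_nonneg.mpr hrk) (add_nonneg (hC0 s) (norm_nonneg ρ))]
  set S : ℕ → E := fun n => ∑ i ∈ Finset.range n, b i with hS
  have hdec : ∀ s j, j ≤ psel k M s * k s →
      S (N s + j) = S (N s) + (j / k s) • A s + ∑ i ∈ Finset.range (j % k s), a s i := by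
    intro s j hj
    have h1 : S (N s + j) = S (N s) + ∑ i ∈ Finset.range j, b (N s + i) := by
      rw [hS]; exact Finset.sum_range_add b (N s) j
    rw [h1, add_assoc]
    congr 1
    have h2 : ∑ i ∈ Finset.range j, b (N s + i) = ∑ i ∈ Finset.range j, a s (i % k s) :=
      Finset.sum_congr rfl fun i hi =>
        hbv s i (lt_of_lt_of_le (Finset.mem_range.mp hi) hj)
    rw [h2, sum_mod_eq (a s) (k s) j (hk0 s), hA]
  have hEs : ∀ s, ‖S (N s) - (N s : ℝ) • ρ‖ ≤ Ehat k M s := by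
    intro s
    induction s with
    | zero => simp [hS, hN, Ehat]
    | succ s ih =>
      have hd := hdec s (psel k M s * k s) le_rfl
      rw [Nat.mul_div_cancel _ (hk0 s), Nat.mul_mod_left] at hd
      simp only [Finset.range_zero, Finset.sum_empty, add_zero] at hd
      have key : S (N (s + 1)) - ((N (s + 1) : ℕ) : ℝ) • ρ =
          (S (N s) - ((N s : ℕ) : ℝ) • ρ) + (psel k M s : ℝ) • (A s - (k s : ℝ) • ρ) := by
        rw [← hNsucc] at hd
        rw [hd, hNsucc s, ← Nat.cast_smul_eq_nsmul ℝ (psel k M s) (A s)]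
        push_cast
        module
      rw [key, Ehat_succ]
      refine (norm_add_le _ _).trans ?_
      have h4 : ‖(psel k M s : ℝ) • (A s - (k s : ℝ) • ρ)‖
          ≤ (psel k M s : ℝ) * ((k s : ℝ) * (2 : ℝ)⁻¹ ^ s) := by
        rw [norm_smul, Real.norm_natCast]
        exact mul_le_mul_of_nonneg_left (hAρ s) (Nat.cast_nonneg _)
      have := ih
      nlinarith [(Nat.cast_nonneg (psel k M s) : (0:ℝ) ≤ (psel k M s : ℝ)), pow_nonneg (by norm_num : (0:ℝ) ≤ 2⁻¹) s]
  set g : ℕ → ℝ := fun t => ((t : ℝ) + 1)⁻¹ + (2 : ℝ)⁻¹ ^ t + (2 : ℝ)⁻¹ ^ (t + 1) with hg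
  have hmain : ∀ t n, N (t + 1) ≤ n → n < N (t + 1 + 1) →
      ‖(n : ℝ)⁻¹ • S n - ρ‖ ≤ g t := by
    intro t n h1 h2
    obtain ⟨j, hj, hjlt⟩ : ∃ j, n = N (t + 1) + j ∧ j < psel k M (t + 1) * k (t + 1) := by
      refine ⟨n - N (t + 1), by omega, ?_⟩
      have := hNsucc (t + 1)
      omega
    have hd := hdec (t + 1) j hjlt.le
    set q := j / k (t + 1) with hq
    set r := j % k (t + 1) with hr
    have hqr : q * k (t + 1) + r = j := Nat.div_add_mod' j (k (t + 1))
    have hn0 : 0 < n := lt_of_lt_of_le (lt_of_lt_of_le (Nat.succ_pos t) (hNge (t + 1))) h1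
    have hnR : (0 : ℝ) < (n : ℝ) := Nat.cast_pos.mpr hn0
    have hcast : ((n : ℕ) : ℝ) = (N (t + 1) : ℝ) + (q : ℝ) * (k (t + 1) : ℝ) + (r : ℝ) := by
      rw [hj]
      push_cast [← hqr]
      ring
    have key : S n - (n : ℝ) • ρ = (S (N (t + 1)) - ((N (t + 1) : ℕ) : ℝ) • ρ)
        + (q : ℝ) • (A (t + 1) - (k (t + 1) : ℝ) • ρ)
        + ((∑ i ∈ Finset.range r, a (t + 1) i) - (r : ℝ) • ρ) := by
      rw [hcast, hj, hd, ← Nat.cast_smul_eq_nsmul ℝ q (A (t + 1))]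
      module
    have b1 := hEs (t + 1)
    have b2 : ‖(q : ℝ) • (A (t + 1) - (k (t + 1) : ℝ) • ρ)‖ ≤ (n : ℝ) * (2 : ℝ)⁻¹ ^ (t + 1) := by
      rw [norm_smul, Real.norm_natCast]
      have hqk : (q : ℝ) * (k (t + 1) : ℝ) ≤ (n : ℝ) := by
        have : q * k (t + 1) ≤ n := by omega
        exact_mod_cast this
      calc (q : ℝ) * ‖A (t + 1) - (k (t + 1) : ℝ) • ρ‖
          ≤ (q : ℝ) * ((k (t + 1) : ℝ) * (2 : ℝ)⁻¹ ^ (t + 1)) :=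
            mul_le_mul_of_nonneg_left (hAρ (t + 1)) (Nat.cast_nonneg _)
        _ = (q : ℝ) * (k (t + 1) : ℝ) * (2 : ℝ)⁻¹ ^ (t + 1) := by ring
        _ ≤ (n : ℝ) * (2 : ℝ)⁻¹ ^ (t + 1) :=
            mul_le_mul_of_nonneg_right hqk (pow_nonneg (by norm_num) _)
    have b3 : ‖(∑ i ∈ Finset.range r, a (t + 1) i) - (r : ℝ) • ρ‖ ≤ M (t + 1) :=
      hpartial (t + 1) r (le_of_lt (Nat.mod_lt _ (hk0 (t + 1))))
    have hpkn : (psel k M t : ℝ) * (k t : ℝ) ≤ (n : ℝ) := by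
      have h6 : psel k M t * k t ≤ n := le_trans (by rw [hNsucc t]; omega) h1
      exact_mod_cast h6
    have hEstep : Ehat k M (t + 1) ≤ Ehat k M t + (n : ℝ) * (2 : ℝ)⁻¹ ^ t := by
      rw [Ehat_succ]
      have := pow_nonneg (by norm_num : (0 : ℝ) ≤ 2⁻¹) t
      nlinarith
    have ht1 : (0 : ℝ) < (t : ℝ) + 1 := by positivity
    have hEM : Ehat k M t + M (t + 1) ≤ (n : ℝ) * ((t : ℝ) + 1)⁻¹ := by
      have h5 := le_psel k M t
      have hpn : (psel k M t : ℝ) ≤ (n : ℝ) := by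
        have hk1 : (1 : ℝ) ≤ (k t : ℝ) := by exact_mod_cast hk t
        nlinarith [(Nat.cast_nonneg (psel k M t) : (0:ℝ) ≤ (psel k M t : ℝ))]
      rw [show (n : ℝ) * ((t : ℝ) + 1)⁻¹ = (n : ℝ) / ((t : ℝ) + 1) from
        (div_eq_mul_inv _ _).symm, le_div_iff₀ ht1]
      nlinarith
    have htotal : ‖S n - (n : ℝ) • ρ‖ ≤ (n : ℝ) * g t := by
      rw [key]
      refine ((norm_add_le _ _).trans (add_le_add (norm_add_le _ _) le_rfl)).trans ?_
      have hstep : ‖S (N (t + 1)) - ((N (t + 1) : ℕ) : ℝ) • ρ‖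
          + ‖(q : ℝ) • (A (t + 1) - (k (t + 1) : ℝ) • ρ)‖
          + ‖(∑ i ∈ Finset.range r, a (t + 1) i) - (r : ℝ) • ρ‖
          ≤ Ehat k M (t + 1) + (n : ℝ) * (2 : ℝ)⁻¹ ^ (t + 1) + M (t + 1) := by
        gcongr
      refine hstep.trans ?_
      rw [hg]
      nlinarith [hEstep, hEM]
    have havgeq : ‖(n : ℝ)⁻¹ • S n - ρ‖ = (n : ℝ)⁻¹ * ‖S n - (n : ℝ) • ρ‖ := by
      have heq2 : (n : ℝ)⁻¹ • S n - ρ = (n : ℝ)⁻¹ • (S n - (n : ℝ) • ρ) := by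
        rw [smul_sub, inv_smul_smul₀ (ne_of_gt hnR)]
      rw [heq2, norm_smul, norm_inv, Real.norm_natCast]
    rw [havgeq]
    calc (n : ℝ)⁻¹ * ‖S n - (n : ℝ) • ρ‖ ≤ (n : ℝ)⁻¹ * ((n : ℝ) * g t) :=
        mul_le_mul_of_nonneg_left htotal (by positivity)
      _ = g t := by field_simp
  -- conclude
  rw [Metric.tendsto_atTop]
  intro ε hε
  have hg0 : Tendsto g atTop (𝓝 0) := by
    have h1 : Tendsto (fun t : ℕ => ((t : ℝ) + 1)⁻¹) atTop (𝓝 0) := by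
      simpa [one_div] using tendsto_one_div_add_atTop_nhds_zero_nat (𝕜 := ℝ)
    have h2 : Tendsto (fun t : ℕ => (2 : ℝ)⁻¹ ^ t) atTop (𝓝 0) :=
      tendsto_pow_atTop_nhds_zero_of_lt_one (by norm_num) (by norm_num)
    have h3 : Tendsto (fun t : ℕ => (2 : ℝ)⁻¹ ^ (t + 1)) atTop (𝓝 0) :=
      h2.comp (tendsto_add_atTop_nat 1)
    have := (h1.add h2).add h3
    simpa [hg] using this
  obtain ⟨T, hT⟩ := (Metric.tendsto_atTop.mp hg0) ε hε
  refine ⟨N (T + 1), fun n hn => ?_⟩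
  have hP0 : N 0 ≤ n := by simp [hN]
  set t' := Nat.findGreatest (fun s => N s ≤ n) (n + 1) with ht'
  have hspec : N t' ≤ n :=
    Nat.findGreatest_spec (P := fun s => N s ≤ n) (Nat.zero_le (n + 1)) hP0
  have hTn : T + 1 ≤ n + 1 := by
    have := (hNge (T + 1)).trans hn
    omega
  have hge : T + 1 ≤ t' := Nat.le_findGreatest hTn hn
  have ht'n : t' ≤ n := (hNge t').trans hspec
  have hgt : n < N (t' + 1) := by
    by_contra h
    push_neg at h
    exact Nat.findGreatest_is_greatest (Nat.lt_succ_self t') (by omega) h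
  clear_value t'
  obtain ⟨t, rfl⟩ : ∃ t, t' = t + 1 := ⟨t' - 1, by omega⟩
  rw [dist_eq_norm]
  have hb1 := hmain t n hspec hgt
  have hb2 : dist (g t) 0 < ε := hT t (by omega)
  rw [Real.dist_0_eq_abs] at hb2
  exact lt_of_le_of_lt hb1 (lt_of_le_of_lt (le_abs_self _) hb2)
end

section
/- Let I be a finite set, → a reflexive transitive relation on I, and for each i ∈ I let ρ_i ⊆ ℝ^d. Suppose →' is a sub-relation of → with the interpolation property: whenever i → k, there is a →'-path i = i₁ →' i₂ →' ⋯ →' i_m = k. Then ⋃_{paths p in (I,→)} conv(⋃_{i∈p} ρ_i) = ⋃_{paths p in (I,→')} conv(⋃_{i∈p} ρ_i), where a path in a relation is a finite sequence i₁, …, i_ℓ with consecutive terms related (ℓ = 1 allowed). -/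
/-- The union, over all finite paths of the relation `s` on `I`, of the convex hulls of the
unions of the sets `ρ i` visited by the path. -/
def pathHullUnion {I : Type*} {E : Type*} [AddCommGroup E] [Module ℝ E]
    (s : I → I → Prop) (ρ : I → Set E) : Set E :=
  {x | ∃ (ℓ : ℕ) (p : ℕ → I), 1 ≤ ℓ ∧ (∀ k, k + 1 < ℓ → s (p k) (p (k + 1))) ∧
    x ∈ convexHull ℝ (⋃ k ∈ Finset.range ℓ, ρ (p k))}

/-!
Every path of `r'` is a path of `r`, which gives one inclusion. Conversely, replacing each
edge `p k → p (k + 1)` of an `r`-path by an `r'`-path between the same endpoints and gluing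
the pieces gives an `r'`-path visiting every vertex of the original one; the union of the
visited sets `ρ i` can only grow, and so can its convex hull.
-/

open Set

-- `ℓ` counts vertices, not edges.
def IsPathOfLength {α : Type*} (s : α → α → Prop) (ℓ : ℕ) (p : ℕ → α) : Prop :=
  ∀ k, k + 1 < ℓ → s (p k) (p (k + 1))

-- When `q (m - 1) = u 0`, this glues the two paths at their common vertex.
def pathGlue {α : Type*} (m : ℕ) (q u : ℕ → α) : ℕ → α :=
  fun j => if j < m then q j else u (j + 1 - m)

section PathGlue

variable {α : Type*} {m n : ℕ} {q u : ℕ → α}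

lemma pathGlue_of_lt {j : ℕ} (hj : j < m) : pathGlue m q u j = q j := if_pos hj

lemma pathGlue_of_le (hm : 1 ≤ m) (hqu : q (m - 1) = u 0) {j : ℕ} (hj : m ≤ j + 1) :
    pathGlue m q u j = u (j + 1 - m) := by
  rcases hj.eq_or_lt with hj | hj
  · rw [pathGlue_of_lt (by omega), ← hj, Nat.sub_self, ← hqu, show j = m - 1 by omega]
  · exact if_neg (by omega)

lemma IsPathOfLength.glue {s : α → α → Prop} (hq : IsPathOfLength s m q)
    (hu : IsPathOfLength s n u) (hm : 1 ≤ m) (hqu : q (m - 1) = u 0) :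
    IsPathOfLength s (m + n - 1) (pathGlue m q u) := by
  intro j hj
  by_cases hjm : j + 1 < m
  · rw [pathGlue_of_lt hjm, pathGlue_of_lt (by omega)]
    exact hq j hjm
  · rw [pathGlue_of_le hm hqu (by omega), pathGlue_of_le hm hqu (by omega),
      show j + 1 + 1 - m = j + 1 - m + 1 by omega]
    exact hu _ (by omega)

lemma pathGlue_last (hm : 1 ≤ m) (hn : 1 ≤ n) (hqu : q (m - 1) = u 0) :
    pathGlue m q u (m + n - 1 - 1) = u (n - 1) := by
  rw [pathGlue_of_le hm hqu (by omega)]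
  congr 1
  omega

lemma image_Iio_subset_pathGlue_left (hn : 1 ≤ n) :
    q '' Iio m ⊆ pathGlue m q u '' Iio (m + n - 1) := by
  rintro _ ⟨k, hk, rfl⟩
  exact ⟨k, by simp only [mem_Iio] at hk ⊢; omega, pathGlue_of_lt hk⟩

lemma image_Iio_subset_pathGlue_right (hm : 1 ≤ m) (hqu : q (m - 1) = u 0) :
    u '' Iio n ⊆ pathGlue m q u '' Iio (m + n - 1) := by
  rintro _ ⟨k, hk, rfl⟩
  simp only [mem_Iio] at hk
  refine ⟨k + m - 1, by simp only [mem_Iio]; omega, ?_⟩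
  rw [pathGlue_of_le hm hqu (by omega)]
  congr 1
  omega

end PathGlue

lemma IsPathOfLength.exists_refinement {α : Type*} {s t : α → α → Prop}
    (hst : ∀ i k, s i k → ∃ (m : ℕ) (q : ℕ → α), 1 ≤ m ∧ q 0 = i ∧ q (m - 1) = k ∧
      IsPathOfLength t m q)
    {ℓ : ℕ} (hℓ : 1 ≤ ℓ) {p : ℕ → α} (hp : IsPathOfLength s ℓ p) :
    ∃ (m : ℕ) (q : ℕ → α), 1 ≤ m ∧ IsPathOfLength t m q ∧ q (m - 1) = p (ℓ - 1) ∧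
      p '' Iio ℓ ⊆ q '' Iio m := by
  induction ℓ, hℓ using Nat.le_induction with
  | base => exact ⟨1, p, le_rfl, fun k hk => by omega, rfl, subset_rfl⟩
  | succ ℓ hℓ ih =>
    obtain ⟨m, q, hm, hq, hqp, hpq⟩ := ih fun k hk => hp k (by omega)
    have hedge : s (p (ℓ - 1)) (p ℓ) := by
      simpa [show ℓ - 1 + 1 = ℓ by omega] using hp (ℓ - 1) (by omega)
    obtain ⟨n, u, hn, hu0, hulast, hu⟩ := hst _ _ hedge
    have hqu : q (m - 1) = u 0 := hqp.trans hu0.symm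
    refine ⟨m + n - 1, pathGlue m q u, by omega, hq.glue hu hm hqu,
      (pathGlue_last hm hn hqu).trans hulast, ?_⟩
    rintro _ ⟨k, hk, rfl⟩
    rcases (show k < ℓ ∨ k = ℓ by simp only [mem_Iio] at hk; omega) with hk | rfl
    · exact image_Iio_subset_pathGlue_left hn (hpq ⟨k, hk, rfl⟩)
    · exact image_Iio_subset_pathGlue_right hm hqu ⟨n - 1, by simp only [mem_Iio]; omega, hulast⟩

lemma biUnion_range_subset_of_image_Iio_subset {α β : Type*} (ρ : α → Set β) {ℓ m : ℕ}
    {p q : ℕ → α} (h : p '' Iio ℓ ⊆ q '' Iio m) :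
    ⋃ k ∈ Finset.range ℓ, ρ (p k) ⊆ ⋃ j ∈ Finset.range m, ρ (q j) := by
  refine iUnion₂_subset fun k hk => ?_
  obtain ⟨j, hj, hqj⟩ := h ⟨k, Finset.mem_range.mp hk, rfl⟩
  exact subset_iUnion₂_of_subset j (Finset.mem_range.mpr hj) (by rw [hqj])

section PathHullUnion

variable {I E : Type*} [AddCommGroup E] [Module ℝ E] {s t : I → I → Prop}

lemma pathHullUnion_mono (hst : ∀ i j, s i j → t i j) (ρ : I → Set E) :
    pathHullUnion s ρ ⊆ pathHullUnion t ρ := by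
  rintro x ⟨ℓ, p, hℓ, hp, hx⟩
  exact ⟨ℓ, p, hℓ, fun k hk => hst _ _ (hp k hk), hx⟩

lemma pathHullUnion_subset_of_forall_exists_path
    (hst : ∀ i k, s i k → ∃ (m : ℕ) (q : ℕ → I), 1 ≤ m ∧ q 0 = i ∧ q (m - 1) = k ∧
      IsPathOfLength t m q)
    (ρ : I → Set E) :
    pathHullUnion s ρ ⊆ pathHullUnion t ρ := by
  rintro x ⟨ℓ, p, hℓ, hp, hx⟩
  obtain ⟨m, q, hm, hq, -, hpq⟩ := IsPathOfLength.exists_refinement hst hℓ hp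
  exact ⟨m, q, hm, hq, convexHull_mono (biUnion_range_subset_of_image_Iio_subset ρ hpq) hx⟩

end PathHullUnion

theorem stmt11_general {I : Type*} {E : Type*} [NormedAddCommGroup E] [NormedSpace ℝ E]
    (r r' : I → I → Prop)
    (hsub : ∀ i j, r' i j → r i j)
    (hinterp : ∀ i k, r i k → ∃ (m : ℕ) (q : ℕ → I), 1 ≤ m ∧ q 0 = i ∧ q (m - 1) = k ∧
      ∀ j, j + 1 < m → r' (q j) (q (j + 1)))
    (ρ : I → Set E) :
    pathHullUnion r ρ = pathHullUnion r' ρ :=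
  (pathHullUnion_subset_of_forall_exists_path hinterp ρ).antisymm (pathHullUnion_mono hsub ρ)

theorem stmt11 {I : Type*} [Fintype I] {E : Type*} [NormedAddCommGroup E] [NormedSpace ℝ E]
    (r r' : I → I → Prop) (hrefl : ∀ i, r i i)
    (htrans : ∀ i j k, r i j → r j k → r i k)
    (hsub : ∀ i j, r' i j → r i j)
    (hinterp : ∀ i k, r i k → ∃ (m : ℕ) (q : ℕ → I), 1 ≤ m ∧ q 0 = i ∧ q (m - 1) = k ∧
      ∀ j, j + 1 < m → r' (q j) (q (j + 1)))
    (ρ : I → Set E) :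
    pathHullUnion r ρ = pathHullUnion r' ρ :=
  stmt11_general r r' hsub hinterp ρ
end
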